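/- arXiv:1201.6401 — 4 statements merged into one kernel-verified Lean document; each statement's English description precedes it below -/
import Mathlib

section
/- Let λ ∈ U be any point with f_i(λ) ≠ 0 for all i, and let ε > 0. Then there exist an admissible index tuple I = (i_1 < ⋯ < i_{m−1}), rational numbers ℓ_1, …, ℓ_{m−1} ∈ ℚ ∖ ℤ with ℓ_s − ℓ_t ∉ ℤ for s ≠ t, and elements u_1, …, u_{m−1} ∈ K ∖ {0} with ν(u_t) = ℓ_t for each t, such that ‖F(T_I(u_1, …, u_{m−1})) − F(λ)‖ < ε (Euclidean norm on ℝ^m). -/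
/-!
Put `w i = ν (f_i λ)` and take an admissible `I` maximizing `∑ j, w (I j) - ν (det B_I)` over the
nonsingular minors. Exchanging the row `I t` for the row `i` multiplies the minor by the Cramer
coefficient `c i t`, so maximality gives `w i ≤ ν (c i t) + w (I t)` whenever `c i t ≠ 0`. In the
chart `T_I` one has `f_i (T_I x) - f_i λ = ∑ t, c i t * (x t - f_{I t} λ)`. Take
`x t = f_{I t} λ + v t` with `ν (v t) = ℓ t` a rational just below `w (I t)`, avoiding finitely
many values and with pairwise non-integral differences. As `ν (c i t) ∈ ℤ`, the valuations `w i`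
and `ν (c i t * v t)` are then pairwise distinct, so `ν (f_i (T_I x))` is their minimum, which lies
in `(w i - δ, w i]`. Since `F` depends continuously on the vector `(ν (f_i ·))_i`, this puts
`F (T_I x)` within `ε` of `F λ`.
-/

/-- The additive valuation associated to the norm of a nonarchimedean normed field:
`ν x = -log ‖x‖`. -/
noncomputable def nuVal (K : Type*) [NormedField K] (x : K) : ℝ := -Real.log ‖x‖

/-- The affine form `f_i(x) = β_{i,1} x_1 + ⋯ + β_{i,m-1} x_{m-1} + β_{i,m}`
(here with `m - 1` replaced by `m`, i.e. coefficients indexed by `Fin (m+1)`). -/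
noncomputable def affForm (K : Type*) [NormedField K] {N m : ℕ}
    (B : Matrix (Fin N) (Fin (m + 1)) ℤ) (i : Fin N) (x : Fin m → K) : K :=
  (∑ t : Fin m, (B i t.castSucc : K) * x t) + (B i (Fin.last m) : K)

/-- `F(λ)_ℓ = Σ_i β_{i,ℓ} ν(f_i(λ))`. -/
noncomputable def Fmap (K : Type*) [NormedField K] {N m : ℕ}
    (B : Matrix (Fin N) (Fin (m + 1)) ℤ) (lam : Fin m → K) (ℓ : Fin (m + 1)) : ℝ :=
  ∑ i, (B i ℓ : ℝ) * nuVal K (affForm K B i lam)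

/-- `I = (i_1 < ⋯ < i_{m-1})` is admissible if the corresponding minor of `B`
is invertible over `ℚ`. -/
def Admissible {N m : ℕ} (B : Matrix (Fin N) (Fin (m + 1)) ℤ) (I : Fin m → Fin N) : Prop :=
  StrictMono I ∧ (Matrix.of fun j t : Fin m => (B (I j) t.castSucc : ℚ)).det ≠ 0

open Matrix

section Valuation

variable {K : Type*} [NormedField K] {x y : K}

lemma nuVal_mul (hx : x ≠ 0) (hy : y ≠ 0) : nuVal K (x * y) = nuVal K x + nuVal K y := by
  rw [nuVal, nuVal, nuVal, norm_mul, Real.log_mul (norm_ne_zero_iff.2 hx) (norm_ne_zero_iff.2 hy)]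
  ring

lemma nuVal_eq_nuVal_iff (hx : x ≠ 0) (hy : y ≠ 0) : nuVal K x = nuVal K y ↔ ‖x‖ = ‖y‖ := by
  rw [nuVal, nuVal, neg_inj]
  exact Real.log_injOn_pos.eq_iff (norm_pos_iff.2 hx) (norm_pos_iff.2 hy)

lemma nuVal_le_nuVal_iff (hx : x ≠ 0) (hy : y ≠ 0) : nuVal K x ≤ nuVal K y ↔ ‖y‖ ≤ ‖x‖ := by
  rw [nuVal, nuVal, neg_le_neg_iff]
  exact Real.log_le_log_iff (norm_pos_iff.2 hy) (norm_pos_iff.2 hx)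

lemma lt_nuVal_iff (hx : x ≠ 0) (r : ℝ) : r < nuVal K x ↔ ‖x‖ < Real.exp (-r) := by
  rw [nuVal, lt_neg, Real.log_lt_iff_lt_exp (norm_pos_iff.2 hx)]

end Valuation

section Ultrametric

variable {M ι : Type*} [SeminormedAddCommGroup M] [IsUltrametricDist M]

lemma norm_le_norm_add_sum_of_pairwise_ne {a : M} {s : Finset ι} {x : ι → M}
    (hs : (s : Set ι).Pairwise fun i j => ‖x i‖ ≠ ‖x j‖) (ha : ∀ i ∈ s, ‖x i‖ ≠ ‖a‖) :
    ‖a‖ ≤ ‖a + ∑ i ∈ s, x i‖ := by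
  rcases s.eq_empty_or_nonempty with rfl | hne
  · simp
  obtain ⟨j, hj, hjmax⟩ := s.exists_mem_eq_sup' hne (‖x ·‖)
  have hsum : ‖∑ i ∈ s, x i‖ = ‖x j‖ :=
    (IsUltrametricDist.norm_sum_eq_sup'_of_pairwise_ne hne hs).trans hjmax
  rw [IsUltrametricDist.norm_add_eq_max_of_norm_ne_norm (hsum ▸ (ha j hj).symm)]
  exact le_max_left _ _

lemma norm_add_sum_lt {a : M} {s : Finset ι} {x : ι → M} {C : ℝ} (ha : ‖a‖ < C)
    (hx : ∀ i ∈ s, ‖x i‖ < C) : ‖a + ∑ i ∈ s, x i‖ < C := by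
  refine (IsUltrametricDist.norm_add_le_max _ _).trans_lt (max_lt ha ?_)
  rcases s.eq_empty_or_nonempty with rfl | hne
  · simpa using (norm_nonneg a).trans_lt ha
  · exact (hne.norm_sum_le_sup'_norm x).trans_lt ((Finset.sup'_lt_iff hne).2 hx)

variable {K : Type*} [NormedField K] [IsUltrametricDist K]

lemma nuVal_add_eq_of_lt {x y : K} (hx : x ≠ 0) (hy : y ≠ 0) (h : nuVal K x < nuVal K y) :
    nuVal K (x + y) = nuVal K x := by
  have hlt : ‖y‖ < ‖x‖ := lt_of_not_ge fun hle => h.not_ge ((nuVal_le_nuVal_iff hy hx).2 hle)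
  rw [nuVal, nuVal, IsUltrametricDist.norm_add_eq_max_of_norm_ne_norm hlt.ne', max_eq_left hlt.le]

lemma nuVal_add_sum_mem_Ioc {a : K} (ha : a ≠ 0) {s : Finset ι} {x : ι → K}
    (hx : ∀ i ∈ s, x i ≠ 0) (hs : (s : Set ι).Pairwise fun i j => nuVal K (x i) ≠ nuVal K (x j))
    (hxa : ∀ i ∈ s, nuVal K (x i) ≠ nuVal K a) {r : ℝ} (hr : r < nuVal K a)
    (hxr : ∀ i ∈ s, r < nuVal K (x i)) :
    nuVal K (a + ∑ i ∈ s, x i) ∈ Set.Ioc r (nuVal K a) := by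
  have hle : ‖a‖ ≤ ‖a + ∑ i ∈ s, x i‖ := by
    refine norm_le_norm_add_sum_of_pairwise_ne (fun i hi j hj hij => ?_) fun i hi => ?_
    · exact mt (nuVal_eq_nuVal_iff (hx i hi) (hx j hj)).2 (hs hi hj hij)
    · exact mt (nuVal_eq_nuVal_iff (hx i hi) ha).2 (hxa i hi)
  have hne : a + ∑ i ∈ s, x i ≠ 0 := norm_pos_iff.1 ((norm_pos_iff.2 ha).trans_le hle)
  refine ⟨(lt_nuVal_iff hne r).2 (norm_add_sum_lt ((lt_nuVal_iff ha r).1 hr) fun i hi => ?_),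
    (nuVal_le_nuVal_iff hne ha).2 hle⟩
  exact (lt_nuVal_iff (hx i hi) r).1 (hxr i hi)

end Ultrametric

namespace Matrix

variable {R ι n : Type*} [Field R] [Fintype ι] [Fintype n]

lemma rank_submatrix_of_rank_eq_card {n₀ : Type*} [Fintype n₀] {A : Matrix ι n R}
    (hA : A.rank = Fintype.card n) {c : n₀ → n} (hc : Function.Injective c) :
    (A.submatrix id c).rank = Fintype.card n₀ := by
  have hcols : LinearIndependent R A.col := by
    rw [linearIndependent_iff_card_eq_finrank_span, Set.finrank, ← rank_eq_finrank_span_cols, hA]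
  rw [← rank_transpose]
  exact LinearIndependent.rank_matrix (hcols.comp c hc)

lemma exists_det_submatrix_ne_zero [DecidableEq n] {A : Matrix ι n R}
    (hA : A.rank = Fintype.card n) : ∃ I : n → ι, (A.submatrix I id).det ≠ 0 := by
  obtain ⟨κ, a, ha, hspan, hli⟩ := exists_linearIndependent' R A.row
  have : Finite κ := Finite.of_injective a ha
  have : Fintype κ := Fintype.ofFinite κ
  have hcard : Fintype.card κ = Fintype.card n := by
    rw [linearIndependent_iff_card_eq_finrank_span.1 hli, Set.finrank, hspan,
      ← rank_eq_finrank_span_row, hA]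
  let e : n ≃ κ := Fintype.equivOfCardEq hcard.symm
  refine ⟨a ∘ e, ((isUnit_iff_isUnit_det _).1 ?_).ne_zero⟩
  exact linearIndependent_rows_iff_isUnit.1 (hli.comp e e.injective)

end Matrix

section Minors

variable {N m : ℕ} (B : Matrix (Fin N) (Fin (m + 1)) ℤ)

def linearMinor (I : Fin m → Fin N) : Matrix (Fin m) (Fin m) ℚ :=
  Matrix.of fun j t => (B (I j) t.castSucc : ℚ)

/-- By Cramer's rule, the coordinates of the linear part of row `i` of `B` in the basis formed by
the rows `I` (when `linearMinor B I` is invertible). -/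
noncomputable def cramerCoeff (I : Fin m → Fin N) (i : Fin N) (t : Fin m) : ℚ :=
  (linearMinor B (Function.update I t i)).det / (linearMinor B I).det

variable {B} {I : Fin m → Fin N}

lemma linearMinor_update (t : Fin m) (i : Fin N) :
    linearMinor B (Function.update I t i) =
      (linearMinor B I).updateRow t fun s => (B i s.castSucc : ℚ) := by
  ext j s
  rcases eq_or_ne j t with rfl | hj
  · simp [linearMinor]
  · simp [linearMinor, hj]

lemma linearMinor_comp_perm (σ : Equiv.Perm (Fin m)) :
    linearMinor B (I ∘ σ) = (linearMinor B I).submatrix σ id :=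
  rfl

lemma det_linearMinor_update (hI : (linearMinor B I).det ≠ 0) (t : Fin m) (i : Fin N) :
    (linearMinor B (Function.update I t i)).det = cramerCoeff B I i t * (linearMinor B I).det :=
  (div_mul_cancel₀ _ hI).symm

lemma sum_cramerCoeff_mul (hI : (linearMinor B I).det ≠ 0) (i : Fin N) (s : Fin m) :
    ∑ t, cramerCoeff B I i t * (B (I t) s.castSucc : ℚ) = B i s.castSucc := by
  have h := congrFun (mulVec_cramer (linearMinor B I)ᵀ fun s => (B i s.castSucc : ℚ)) s
  simp only [cramer_transpose_apply, ← linearMinor_update, det_transpose, mulVec, dotProduct,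
    transpose_apply, Pi.smul_apply, smul_eq_mul] at h
  simp only [cramerCoeff, div_mul_eq_mul_div, ← Finset.sum_div, div_eq_iff hI]
  rw [mul_comm _ (linearMinor B I).det, ← h]
  exact Finset.sum_congr rfl fun t _ => mul_comm _ _

lemma injective_of_det_linearMinor_ne_zero (hI : (linearMinor B I).det ≠ 0) :
    Function.Injective I := fun j j' hjj' => by
  by_contra hne
  exact hI (det_zero_of_row_eq hne (by ext s; simp [linearMinor, hjj']))

variable (B) in
lemma exists_det_linearMinor_ne_zero (hrank : (B.map (Int.cast : ℤ → ℚ)).rank = m + 1) :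
    ∃ I : Fin m → Fin N, (linearMinor B I).det ≠ 0 := by
  exact exists_det_submatrix_ne_zero
    (rank_submatrix_of_rank_eq_card (by simpa using hrank) (Fin.castSucc_injective m))

end Minors

section MinorWeight

variable (K : Type*) [NormedField K] {N m : ℕ} (B : Matrix (Fin N) (Fin (m + 1)) ℤ)
  (w : Fin N → ℝ)

noncomputable def minorWeight (I : Fin m → Fin N) : ℝ :=
  ∑ j, w (I j) - nuVal K ((linearMinor B I).det : K)

variable {K B w}

lemma minorWeight_comp_perm (I : Fin m → Fin N) (σ : Equiv.Perm (Fin m)) :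
    minorWeight K B w (I ∘ σ) = minorWeight K B w I := by
  rw [minorWeight, minorWeight, linearMinor_comp_perm, det_permute, Function.comp_def,
    Equiv.sum_comp σ fun j => w (I j)]
  rcases Int.units_eq_one_or (Equiv.Perm.sign σ) with h | h <;> simp [h, nuVal]

variable (K w) in
lemma exists_admissible_forall_minorWeight_le
    (hrank : (B.map (Int.cast : ℤ → ℚ)).rank = m + 1) :
    ∃ I, Admissible B I ∧
      ∀ J, (linearMinor B J).det ≠ 0 → minorWeight K B w J ≤ minorWeight K B w I := by
  obtain ⟨I₀, hI₀, hmax⟩ := (Finset.univ.filter fun J => (linearMinor B J).det ≠ 0).exists_max_image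
    (minorWeight K B w) (by simpa [Finset.Nonempty] using exists_det_linearMinor_ne_zero B hrank)
  rw [Finset.mem_filter] at hI₀
  let σ := Tuple.sort I₀
  refine ⟨I₀ ∘ σ, ⟨?_, ?_⟩, fun J hJ => ?_⟩
  · exact (Tuple.monotone_sort I₀).strictMono_of_injective
      ((injective_of_det_linearMinor_ne_zero hI₀.2).comp σ.injective)
  · show (linearMinor B (I₀ ∘ σ)).det ≠ 0
    rw [linearMinor_comp_perm, det_permute]
    exact mul_ne_zero (by simp) hI₀.2
  · rw [minorWeight_comp_perm]
    exact hmax J (Finset.mem_filter.2 ⟨Finset.mem_univ J, hJ⟩)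

lemma le_nuVal_cramerCoeff_add [CharZero K] {I : Fin m → Fin N} (hI : (linearMinor B I).det ≠ 0)
    (hmax : ∀ J, (linearMinor B J).det ≠ 0 → minorWeight K B w J ≤ minorWeight K B w I)
    {i : Fin N} {t : Fin m} (hc : cramerCoeff B I i t ≠ 0) :
    w i ≤ nuVal K (cramerCoeff B I i t : K) + w (I t) := by
  have hdet := det_linearMinor_update hI t i
  have hle := hmax _ (hdet ▸ mul_ne_zero hc hI)
  have hsum : ∑ j, w (Function.update I t i j) = w i + ∑ j ∈ Finset.univ \ {t}, w (I j) := by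
    simpa only [← Function.comp_apply (f := w), Function.comp_update]
      using Finset.sum_update_of_mem (Finset.mem_univ t) (w ∘ I) (w i)
  have hsumI := Finset.sum_eq_add_sum_sdiff_singleton_of_mem (Finset.mem_univ t) fun j => w (I j)
  have hν : nuVal K ((linearMinor B (Function.update I t i)).det : K) =
      nuVal K (cramerCoeff B I i t : K) + nuVal K ((linearMinor B I).det : K) := by
    rw [hdet, Rat.cast_mul, nuVal_mul (Rat.cast_ne_zero.2 hc) (Rat.cast_ne_zero.2 hI)]
  rw [minorWeight, minorWeight, hsum, hν] at hle
  linarith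

end MinorWeight

section AffineChart

variable (K : Type*) [NormedField K] [CharZero K] {N m : ℕ} {B : Matrix (Fin N) (Fin (m + 1)) ℤ}
  {I : Fin m → Fin N}

lemma exists_affine_chart (hI : (linearMinor B I).det ≠ 0) :
    ∃ T : (Fin m → K) → (Fin m → K), Function.Bijective T ∧
      ∀ x j, affForm K B (I j) (T x) = x j := by
  let M : Matrix (Fin m) (Fin m) K := (linearMinor B I).map (Rat.castHom K)
  have hM : IsUnit M := by
    rw [isUnit_iff_isUnit_det, show M.det = _ from (RingHom.map_det _ _).symm, isUnit_iff_ne_zero]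
    exact Rat.cast_ne_zero.2 hI
  have hL : (fun y j => affForm K B (I j) y) =
      fun y => M *ᵥ y + fun j => (B (I j) (Fin.last m) : K) := by
    ext y j
    simp [affForm, M, linearMinor, mulVec, dotProduct]
  have hbij : Function.Bijective fun y j => affForm K B (I j) y := by
    rw [hL]
    exact (Equiv.addRight _).bijective.comp
      ⟨mulVec_injective_iff_isUnit.2 hM, mulVec_surjective_iff_isUnit.2 hM⟩
  let e := Equiv.ofBijective _ hbij
  exact ⟨e.symm, e.symm.bijective, fun x => congrFun (e.apply_symm_apply x)⟩

variable {K}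

lemma affForm_sub_affForm (hI : (linearMinor B I).det ≠ 0) (i : Fin N) (y y' : Fin m → K) :
    affForm K B i y - affForm K B i y' =
      ∑ t, (cramerCoeff B I i t : K) * (affForm K B (I t) y - affForm K B (I t) y') := by
  have hrow (s : Fin m) :
      (B i s.castSucc : K) = ∑ t, (cramerCoeff B I i t : K) * B (I t) s.castSucc := by
    exact_mod_cast (sum_cramerCoeff_mul hI i s).symm
  simp only [affForm, add_sub_add_right_eq_sub, ← Finset.sum_sub_distrib, ← mul_sub, hrow,
    Finset.sum_mul, Finset.mul_sum, mul_assoc]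
  exact Finset.sum_comm

end AffineChart

section RationalChoice

lemma exists_rat_mem_Ioo_notMem {a b : ℝ} (hab : a < b) {E : Set ℝ} (hE : E.Finite) :
    ∃ q : ℚ, (q : ℝ) ∈ Set.Ioo a b ∧ (q : ℝ) ∉ E := by
  obtain ⟨a', ha, hab'⟩ := exists_rat_btwn hab
  obtain ⟨b', hab'', hb⟩ := exists_rat_btwn hab'
  obtain ⟨q, ⟨hq₁, hq₂⟩, hqE⟩ := ((Set.Ioo_infinite (by exact_mod_cast hab'' : a' < b')).sdiff
    (hE.preimage Rat.cast_injective.injOn)).nonempty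
  exact ⟨q, ⟨ha.trans (by exact_mod_cast hq₁), lt_trans (by exact_mod_cast hq₂) hb⟩, hqE⟩

/-- Inside one cell `(k, k + 1)` of `ℤ`, only finitely many rationals are congruent to an element
of `F` modulo `ℤ`. -/
lemma exists_rat_mem_Ioo_sub_ne_int {a b : ℝ} (hab : a < b) (E : Finset ℝ) (F : Finset ℚ) :
    ∃ q : ℚ, (q : ℝ) ∈ Set.Ioo a b ∧ (q : ℝ) ∉ E ∧ ∀ f ∈ F, ∀ z : ℤ, q - f ≠ z := by
  set k := ⌊(a + b) / 2⌋
  have hk₁ := Int.floor_le ((a + b) / 2)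
  have hk₂ := Int.lt_floor_add_one ((a + b) / 2)
  have hcell : max a k < min b (k + 1) := by
    refine max_lt (lt_min hab ?_) (lt_min ?_ (by linarith)) <;> linarith
  obtain ⟨q, ⟨hq₁, hq₂⟩, hqE⟩ := exists_rat_mem_Ioo_notMem hcell
    (E ∪ F.image fun f => (k : ℝ) + (Int.fract f : ℚ)).finite_toSet
  simp only [Finset.coe_union, Finset.coe_image, Set.mem_union, Set.mem_image, not_or,
    not_exists, not_and] at hqE
  refine ⟨q, ⟨(le_max_left _ _).trans_lt hq₁, hq₂.trans_le (min_le_left _ _)⟩, hqE.1,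
    fun f hf z hz => hqE.2 f hf ?_⟩
  have hfloor : ⌊q⌋ = k := Int.floor_eq_iff.2
    ⟨by exact_mod_cast ((le_max_right _ _).trans_lt hq₁).le,
      by exact_mod_cast hq₂.trans_le (min_le_right _ _)⟩
  rw [← Int.fract_eq_fract.2 ⟨z, hz⟩, Int.fract, hfloor]
  push_cast
  ring

lemma exists_rat_tuple_mem_Ioo {m : ℕ} (a b : Fin m → ℝ) (hab : ∀ t, a t < b t)
    (E : Fin m → Finset ℝ) :
    ∃ ℓ : Fin m → ℚ, (∀ t, (ℓ t : ℝ) ∈ Set.Ioo (a t) (b t) ∧ (ℓ t : ℝ) ∉ E t) ∧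
      (∀ t, ∀ z : ℤ, ℓ t ≠ z) ∧ ∀ s t, s ≠ t → ∀ z : ℤ, ℓ s - ℓ t ≠ z := by
  induction m with
  | zero => exact ⟨Fin.elim0, fun t => t.elim0, fun t => t.elim0, fun s => s.elim0⟩
  | succ m ih =>
    obtain ⟨ℓ, hmem, hint, hsub⟩ := ih (fun t => a t.succ) (fun t => b t.succ)
      (fun t => hab t.succ) fun t => E t.succ
    obtain ⟨q, hqmem, hqE, hq⟩ :=
      exists_rat_mem_Ioo_sub_ne_int (hab 0) (E 0) (insert 0 (Finset.univ.image ℓ))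
    have hq' (t : Fin m) (z : ℤ) : q - ℓ t ≠ z :=
      hq (ℓ t) (Finset.mem_insert_of_mem (Finset.mem_image_of_mem ℓ (Finset.mem_univ t))) z
    refine ⟨Fin.cons q ℓ, Fin.cases ⟨hqmem, hqE⟩ hmem, fun t => ?_, fun s t hst z => ?_⟩
    · cases t using Fin.cases with
      | zero => simpa using hq 0 (Finset.mem_insert_self _ _)
      | succ t => simpa using hint t
    · cases s using Fin.cases <;> cases t using Fin.cases
      · exact absurd rfl hst
      · simpa using hq' _ z
      · intro h
        simp only [Fin.cons_succ, Fin.cons_zero] at h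
        exact hq' _ (-z) (by push_cast; linarith)
      · simpa using hsub _ _ (by simpa using hst) z

end RationalChoice

section Tropicalization

variable {K : Type*} [NormedField K] {N m : ℕ} {B : Matrix (Fin N) (Fin (m + 1)) ℤ}

variable (B) in
lemma exists_pos_forall_sqrt_sum_sq_Fmap_sub_lt (lam : Fin m → K) {ε : ℝ} (hε : 0 < ε) :
    ∃ δ > 0, ∀ y : Fin m → K,
      (∀ i, |nuVal K (affForm K B i y) - nuVal K (affForm K B i lam)| < δ) →
      Real.sqrt (∑ j, (Fmap K B y j - Fmap K B lam j) ^ 2) < ε := by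
  set w : Fin N → ℝ := fun i => nuVal K (affForm K B i lam)
  let g : (Fin N → ℝ) → ℝ := fun x =>
    Real.sqrt (∑ j, (∑ i, (B i j : ℝ) * x i - ∑ i, (B i j : ℝ) * w i) ^ 2)
  have hg : Continuous g := by fun_prop
  obtain ⟨δ, hδ, hclose⟩ := Metric.continuous_iff.1 hg w ε hε
  refine ⟨δ, hδ, fun y hy => ?_⟩
  have h := hclose (fun i => nuVal K (affForm K B i y)) ((dist_pi_lt_iff hδ).2 hy)
  simpa [g, w, Real.dist_eq, Fmap, abs_of_nonneg (Real.sqrt_nonneg _)] using h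

variable [CharZero K] [IsUltrametricDist K] {I : Fin m → Fin N}

lemma abs_nuVal_affForm_sub_lt (hQint : ∀ q : ℚ, q ≠ 0 → ∃ z : ℤ, nuVal K (q : K) = z)
    (hI : (linearMinor B I).det ≠ 0) {lam y : Fin m → K} (hlam : ∀ i, affForm K B i lam ≠ 0)
    (hnc : ∀ i t, cramerCoeff B I i t ≠ 0 →
      nuVal K (affForm K B i lam) ≤
        nuVal K (cramerCoeff B I i t : K) + nuVal K (affForm K B (I t) lam))
    {δ : ℝ} (hδ : 0 < δ) {ℓ : Fin m → ℚ} (hℓ : ∀ t, nuVal K (affForm K B (I t) lam) - δ < ℓ t)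
    (hℓE : ∀ i t, nuVal K (cramerCoeff B I i t : K) + ℓ t ≠ nuVal K (affForm K B i lam))
    (hℓsub : ∀ s t, s ≠ t → ∀ z : ℤ, ℓ s - ℓ t ≠ z)
    (hy₀ : ∀ t, affForm K B (I t) y - affForm K B (I t) lam ≠ 0)
    (hyν : ∀ t, nuVal K (affForm K B (I t) y - affForm K B (I t) lam) = ℓ t) (i : Fin N) :
    |nuVal K (affForm K B i y) - nuVal K (affForm K B i lam)| < δ := by
  set x : Fin m → K := fun t =>
    (cramerCoeff B I i t : K) * (affForm K B (I t) y - affForm K B (I t) lam)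
  set S := Finset.univ.filter fun t => cramerCoeff B I i t ≠ 0
  have hy : affForm K B i y = affForm K B i lam + ∑ t ∈ S, x t := by
    have hsupp : ∑ t ∈ S, x t = ∑ t, x t :=
      Finset.sum_filter_of_ne fun t _ hx hc₀ => hx (by simp [x, hc₀])
    rw [hsupp, ← affForm_sub_affForm hI, add_sub_cancel]
  have hc (t) (ht : t ∈ S) : (cramerCoeff B I i t : K) ≠ 0 :=
    Rat.cast_ne_zero.2 (Finset.mem_filter.1 ht).2
  have hxν (t) (ht : t ∈ S) : nuVal K (x t) = nuVal K (cramerCoeff B I i t : K) + ℓ t := by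
    rw [nuVal_mul (hc t ht) (hy₀ t), hyν]
  have hpair : (S : Set (Fin m)).Pairwise fun t t' => nuVal K (x t) ≠ nuVal K (x t') := by
    intro t ht t' ht' htt' heq
    obtain ⟨z, hz⟩ := hQint _ (Finset.mem_filter.1 ht).2
    obtain ⟨z', hz'⟩ := hQint _ (Finset.mem_filter.1 ht').2
    rw [hxν t ht, hxν t' ht', hz, hz'] at heq
    refine hℓsub t t' htt' (z' - z) ?_
    exact_mod_cast (by linarith : (ℓ t - ℓ t' : ℝ) = z' - z)
  have hlow (t) (ht : t ∈ S) : nuVal K (affForm K B i lam) - δ < nuVal K (x t) := by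
    linarith [hxν t ht, hnc i t (Finset.mem_filter.1 ht).2, hℓ t]
  have hmem := nuVal_add_sum_mem_Ioc (hlam i) (fun t ht => mul_ne_zero (hc t ht) (hy₀ t)) hpair
    (fun t ht => hxν t ht ▸ hℓE i t) (sub_lt_self _ hδ) hlow
  rw [hy, abs_sub_lt_iff]
  constructor <;> linarith [hmem.1, hmem.2]

lemma exists_rat_valued_point_near (hQsub : ∀ q : ℚ, ∃ x : K, x ≠ 0 ∧ nuVal K x = q)
    (hQint : ∀ q : ℚ, q ≠ 0 → ∃ z : ℤ, nuVal K (q : K) = z)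
    (hI : (linearMinor B I).det ≠ 0) {lam : Fin m → K} (hlam : ∀ i, affForm K B i lam ≠ 0)
    (hnc : ∀ i t, cramerCoeff B I i t ≠ 0 →
      nuVal K (affForm K B i lam) ≤
        nuVal K (cramerCoeff B I i t : K) + nuVal K (affForm K B (I t) lam))
    {δ : ℝ} (hδ : 0 < δ) {T : (Fin m → K) → (Fin m → K)}
    (hT : ∀ x j, affForm K B (I j) (T x) = x j) :
    ∃ ℓ : Fin m → ℚ, (∀ t, ∀ z : ℤ, ℓ t ≠ z) ∧ (∀ s t, s ≠ t → ∀ z : ℤ, ℓ s - ℓ t ≠ z) ∧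
      ∃ u : Fin m → K, (∀ t, u t ≠ 0) ∧ (∀ t, nuVal K (u t) = ℓ t) ∧
        ∀ i, |nuVal K (affForm K B i (T u)) - nuVal K (affForm K B i lam)| < δ := by
  set w : Fin N → ℝ := fun i => nuVal K (affForm K B i lam)
  obtain ⟨ℓ, hℓ, hℓZ, hℓsub⟩ := exists_rat_tuple_mem_Ioo (fun t => w (I t) - δ) (fun t => w (I t))
    (fun t => sub_lt_self _ hδ)
    fun t => Finset.univ.image fun i => w i - nuVal K (cramerCoeff B I i t : K)
  choose v hv₀ hvν using fun t => hQsub (ℓ t)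
  have huν (t) : nuVal K (v t + affForm K B (I t) lam) = ℓ t :=
    (nuVal_add_eq_of_lt (hv₀ t) (hlam (I t)) ((hvν t).trans_lt (hℓ t).1.2)).trans (hvν t)
  -- `nuVal K 0 = 0`, while `ℓ t` is not an integer
  have hu₀ (t) : v t + affForm K B (I t) lam ≠ 0 := fun h => hℓZ t 0 (by
    have := huν t
    rw [h, nuVal, norm_zero, Real.log_zero, neg_zero] at this
    exact_mod_cast this.symm)
  refine ⟨ℓ, hℓZ, hℓsub, _, hu₀, huν, abs_nuVal_affForm_sub_lt hQint hI hlam hnc hδ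
    (fun t => (hℓ t).1.1) (fun i t h => (hℓ t).2 ?_) hℓsub (fun t => ?_) (fun t => ?_)⟩
  · exact Finset.mem_image.2 ⟨i, Finset.mem_univ i, by simp only [w, ← h]; ring⟩
  · simpa [hT] using hv₀ t
  · simpa [hT] using hvν t

end Tropicalization

theorem stmt0_general
    (K : Type*) [NormedField K] [CharZero K]
    [IsUltrametricDist K]
    (hQsub : ∀ q : ℚ, ∃ x : K, x ≠ 0 ∧ nuVal K x = (q : ℝ))
    (hQint : ∀ q : ℚ, q ≠ 0 → ∃ z : ℤ, nuVal K ((q : K)) = (z : ℝ))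
    (n m : ℕ)
    (B : Matrix (Fin (n + m + 2)) (Fin (m + 1)) ℤ)
    (hrank : (B.map (Int.cast : ℤ → ℚ)).rank = m + 1)
    (lam : Fin m → K) (hlam : ∀ i, affForm K B i lam ≠ 0)
    (ε : ℝ) (hε : 0 < ε) :
    ∃ I : Fin m → Fin (n + m + 2), Admissible B I ∧
    ∃ T : (Fin m → K) → (Fin m → K), Function.Bijective T ∧
      (∀ (x : Fin m → K) (j : Fin m), affForm K B (I j) (T x) = x j) ∧
    ∃ ℓ : Fin m → ℚ,
      (∀ t, ∀ z : ℤ, ℓ t ≠ (z : ℚ)) ∧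
      (∀ s t, s ≠ t → ∀ z : ℤ, ℓ s - ℓ t ≠ (z : ℚ)) ∧
    ∃ u : Fin m → K, (∀ t, u t ≠ 0) ∧ (∀ t, nuVal K (u t) = (ℓ t : ℝ)) ∧
      Real.sqrt (∑ j : Fin (m + 1), (Fmap K B (T u) j - Fmap K B lam j) ^ 2) < ε := by
  obtain ⟨δ, hδ, hclose⟩ := exists_pos_forall_sqrt_sum_sq_Fmap_sub_lt B lam hε
  obtain ⟨I, hI, hmax⟩ :=
    exists_admissible_forall_minorWeight_le K (fun i => nuVal K (affForm K B i lam)) hrank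
  obtain ⟨T, hT, hTI⟩ := exists_affine_chart K hI.2
  obtain ⟨ℓ, hℓZ, hℓsub, u, hu₀, huν, hnear⟩ := exists_rat_valued_point_near hQsub hQint hI.2 hlam
    (fun _ _ hc => le_nuVal_cramerCoeff_add hI.2 hmax hc) hδ hTI
  exact ⟨I, hI, T, hT, hTI, ℓ, hℓZ, hℓsub, u, hu₀, huν, hclose _ hnear⟩

theorem stmt0
    (K : Type*) [NormedField K] [IsAlgClosed K] [CharZero K] [CompleteSpace K]
    [IsUltrametricDist K]
    (hQsub : ∀ q : ℚ, ∃ x : K, x ≠ 0 ∧ nuVal K x = (q : ℝ))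
    (hQint : ∀ q : ℚ, q ≠ 0 → ∃ z : ℤ, nuVal K ((q : K)) = (z : ℝ))
    (n m : ℕ)
    (B : Matrix (Fin (n + m + 2)) (Fin (m + 1)) ℤ)
    (hrank : (B.map (Int.cast : ℤ → ℚ)).rank = m + 1)
    (hrows : ∀ i, ∃ ℓ, B i ℓ ≠ 0)
    (hcols : ∀ ℓ, (∑ i, B i ℓ) = 0)
    (lam : Fin m → K) (hlam : ∀ i, affForm K B i lam ≠ 0)
    (ε : ℝ) (hε : 0 < ε) :
    ∃ I : Fin m → Fin (n + m + 2), Admissible B I ∧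
    ∃ T : (Fin m → K) → (Fin m → K), Function.Bijective T ∧
      (∀ (x : Fin m → K) (j : Fin m), affForm K B (I j) (T x) = x j) ∧
    ∃ ℓ : Fin m → ℚ,
      (∀ t, ∀ z : ℤ, ℓ t ≠ (z : ℚ)) ∧
      (∀ s t, s ≠ t → ∀ z : ℤ, ℓ s - ℓ t ≠ (z : ℚ)) ∧
    ∃ u : Fin m → K, (∀ t, u t ≠ 0) ∧ (∀ t, nuVal K (u t) = (ℓ t : ℝ)) ∧
      Real.sqrt (∑ j : Fin (m + 1), (Fmap K B (T u) j - Fmap K B lam j) ^ 2) < ε :=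
  stmt0_general K hQsub hQint n m B hrank lam hlam ε hε
end

section
/- Assume at most one index j has a_j = 0. Then there exist at most 2n + 4 affine lines L_1, …, L_N in ℝ² (N ≤ 2n + 4) whose union contains the amoeba: 𝒜 ⊆ L_1 ∪ ⋯ ∪ L_N. -/
/-- `z_i = -b_i / a_i`, the root of the affine form `a_i λ + b_i`. -/
def zrt {N : ℕ} (a b : Fin N → ℚ) (i : Fin N) : ℚ := -(b i) / a i

/-- The piecewise-linear building block `g_{i,j}` of the tropical parametrization. -/
noncomputable def gfun (p : ℕ) {N : ℕ} (a b : Fin N → ℚ) (i j : Fin N) (r : ℝ) : ℝ :=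
  if a j ≠ 0 then
    if zrt a b j = zrt a b i then (padicValRat p (a j) : ℝ) + r
    else (padicValRat p (a j) : ℝ) + min r ((padicValRat p (zrt a b i - zrt a b j) : ℝ))
  else (padicValRat p (b j) : ℝ)

/-- The tropical parametrization `φ_i(r) = (Σ_j a_j g_{i,j}(r), Σ_j b_j g_{i,j}(r))`. -/
noncomputable def phiMap (p : ℕ) {N : ℕ} (a b : Fin N → ℚ) (i : Fin N) (r : ℝ) : ℝ × ℝ :=
  (∑ j, (a j : ℝ) * gfun p a b i j r, ∑ j, (b j : ℝ) * gfun p a b i j r)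

/-- The `p`-adic reduced discriminant amoeba `𝒜 = ⋃_{i : a_i ≠ 0} φ_i(ℝ)`. -/
def amoeba (p : ℕ) {N : ℕ} (a b : Fin N → ℚ) : Set (ℝ × ℝ) :=
  {y | ∃ i : Fin N, a i ≠ 0 ∧ ∃ r : ℝ, phiMap p a b i r = y}


/-!
Along a branch `r ↦ φ_i(r)`, the function `g_{i,j}` has slope `1` exactly for the indices `j` of
the `p`-adic ball `B = {j : v_p(z_i - z_j) > r}`, so `φ_i` is affine with slope
`(Σ_{j∈B} a_j, Σ_{j∈B} b_j)` while `B` is fixed; by the ultrametric inequality the intercept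
depends only on `B`, not on the centre `i`. Hence the amoeba lies on one line per ball. The balls
form a laminar family of nonempty subsets of `{j : a_j ≠ 0}`, and such a family over `m` elements
has at most `2m - 1` members, or `2m - 2` if the whole set is not a member. If some `a_j` vanishes
then `m ≤ n + 2`. Otherwise `m = n + 3`, and the whole index set is a ball only where
`Σ_j a_j = Σ_j b_j = 0` makes `φ_i` constant; that constant value is also taken at the largest
radius where the ball about `z_i` is proper.
-/

open Finset

/-- `v_p(x) > r`, with the convention `v_p(0) = ∞` (Mathlib's `padicValRat p 0 = 0` is a junk
value). -/
def ValGt (p : ℕ) (r : ℝ) (x : ℚ) : Prop := x = 0 ∨ r < padicValRat p x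

namespace ValGt

variable {p : ℕ} {r r' : ℝ} {x y : ℚ}

theorem zero : ValGt p r 0 := Or.inl rfl

theorem mono (h : r ≤ r') (hx : ValGt p r' x) : ValGt p r x :=
  hx.imp_right h.trans_lt

theorem neg_iff : ValGt p r (-x) ↔ ValGt p r x := by
  simp [ValGt, padicValRat.neg]

theorem add (hp : p.Prime) (hx : ValGt p r x) (hy : ValGt p r y) : ValGt p r (x + y) := by
  have := Fact.mk hp
  rcases hx with rfl | hx
  · simpa using hy
  rcases hy with rfl | hy
  · rw [add_zero]; exact Or.inr hx
  by_cases hxy : x + y = 0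
  · exact Or.inl hxy
  · exact Or.inr <| (lt_min hx hy).trans_le
      (by exact_mod_cast padicValRat.min_le_padicValRat_add hxy)

theorem sub (hp : p.Prime) (hx : ValGt p r x) (hy : ValGt p r y) : ValGt p r (x - y) := by
  rw [sub_eq_add_neg]
  exact hx.add hp (neg_iff.2 hy)

end ValGt

theorem padicValRat_sub_eq_of_valGt {p : ℕ} (hp : p.Prime) {r : ℝ} {x y : ℚ}
    (hx : ¬ValGt p r x) (hy : ValGt p r y) : padicValRat p (x - y) = padicValRat p x := by
  have := Fact.mk hp
  simp only [ValGt, not_or, not_lt] at hx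
  by_cases hy0 : y = 0
  · simp [hy0]
  have hlt : padicValRat p x < padicValRat p (-y) := by
    rw [padicValRat.neg]; exact_mod_cast hx.2.trans_lt (hy.resolve_left hy0)
  rw [sub_eq_add_neg]
  refine padicValRat.add_eq_of_lt ?_ hx.1 (neg_ne_zero.2 hy0) hlt
  intro h
  rw [← neg_eq_of_add_eq_zero_right h, padicValRat.neg] at hlt
  exact lt_irrefl _ hlt

def IsLaminar {α : Type*} (F : Finset (Finset α)) : Prop :=
  ∀ S ∈ F, ∀ T ∈ F, S ⊆ T ∨ T ⊆ S ∨ Disjoint S T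

theorem IsLaminar.subset {α : Type*} {F G : Finset (Finset α)} (hF : IsLaminar F) (hG : G ⊆ F) :
    IsLaminar G :=
  fun S hS T hT => hF S (hG hS) T (hG hT)

/-- Splitting off a maximal member `M`, the rest of `F` lives inside `M` or inside `U \ M`. -/
theorem IsLaminar.card_le_two_mul_sub_two {α : Type*} [DecidableEq α] (U : Finset α) :
    ∀ {F : Finset (Finset α)}, IsLaminar F → (∀ S ∈ F, S.Nonempty) → (∀ S ∈ F, S ⊆ U) →
      U ∉ F → #F ≤ 2 * #U - 2 := by
  induction U using Finset.strongInduction with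
  | H U ih =>
  intro F hF hne hU hUF
  obtain rfl | hFne := F.eq_empty_or_nonempty
  · simp
  have bound : ∀ V ⊂ U, V.Nonempty → ∀ G ⊆ F, (∀ S ∈ G, S ⊆ V) → #G ≤ 2 * #V - 1 := by
    intro V hVU hV G hGF hGV
    have hErase := ih V hVU (hF.subset ((erase_subset V G).trans hGF))
      (fun S hS => hne S (hGF (mem_of_mem_erase hS)))
      (fun S hS => hGV S (mem_of_mem_erase hS)) (notMem_erase V G)
    have hpred := pred_card_le_card_erase (s := G) (a := V)
    have hVpos := hV.card_pos
    omega
  obtain ⟨M, hMF, hMmax⟩ := F.exists_maximal hFne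
  have hMU : M ⊂ U := (hU M hMF).ssubset_of_ne (by rintro rfl; exact hUF hMF)
  have hout : ∀ S ∈ F.filter (¬ · ⊆ M), S ⊆ U \ M := by
    intro S hS
    obtain ⟨hSF, hSM⟩ := mem_filter.1 hS
    refine subset_sdiff.2 ⟨hU S hSF, ?_⟩
    rcases hF S hSF M hMF with h | h | h
    · exact absurd h hSM
    · exact absurd (hMmax hSF h) hSM
    · exact h
  have hUM : (U \ M).Nonempty := sdiff_nonempty.2 hMU.not_subset
  have h₁ := bound M hMU (hne M hMF) _ (filter_subset _ F) (fun S hS => (mem_filter.1 hS).2)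
  have h₂ := bound (U \ M) (sdiff_ssubset hMU.subset (hne M hMF)) hUM _ (filter_subset _ F) hout
  have hsplit := F.card_filter_add_card_filter_not (· ⊆ M)
  have hUcard := card_sdiff_add_card_eq_card hMU.subset
  have hMpos := (hne M hMF).card_pos
  have hUMpos := hUM.card_pos
  omega

theorem IsLaminar.card_le_two_mul_sub_one {α : Type*} [DecidableEq α] {U : Finset α}
    {F : Finset (Finset α)} (hF : IsLaminar F) (hne : ∀ S ∈ F, S.Nonempty)
    (hU : ∀ S ∈ F, S ⊆ U) : #F ≤ 2 * #U - 1 := by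
  have hErase := card_le_two_mul_sub_two U (hF.subset (erase_subset U F))
    (fun S hS => hne S (mem_of_mem_erase hS)) (fun S hS => hU S (mem_of_mem_erase hS))
    (notMem_erase U F)
  by_cases hUF : U ∈ F
  · have hpred := pred_card_le_card_erase (s := F) (a := U)
    have hUpos := (hne U hUF).card_pos
    omega
  · rw [erase_eq_of_notMem hUF] at hErase
    omega

section RootBall

variable {p K : ℕ} {a b : Fin K → ℚ} {i i' : Fin K} {r r' : ℝ} {S : Finset (Fin K)}

open scoped Classical in
/-- The indices `j` whose root `z_j` lies in the open `p`-adic ball of radius `p^{-r}` about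
`z_i`. -/
noncomputable def rootBall (p : ℕ) (a b : Fin K → ℚ) (i : Fin K) (r : ℝ) : Finset (Fin K) :=
  {j | a j ≠ 0 ∧ ValGt p r (zrt a b i - zrt a b j)}

theorem mem_rootBall {j : Fin K} :
    j ∈ rootBall p a b i r ↔ a j ≠ 0 ∧ ValGt p r (zrt a b i - zrt a b j) := by
  simp [rootBall]

theorem self_mem_rootBall (hi : a i ≠ 0) : i ∈ rootBall p a b i r :=
  mem_rootBall.2 ⟨hi, by simpa using ValGt.zero⟩

theorem rootBall_subset_support :
    rootBall p a b i r ⊆ ({j | a j ≠ 0} : Finset (Fin K)) := fun _ hj => by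
  simpa using (mem_rootBall.1 hj).1

theorem rootBall_subset_of_le (hp : p.Prime) (hr : r ≤ r')
    (h : ¬Disjoint (rootBall p a b i r) (rootBall p a b i' r')) :
    rootBall p a b i' r' ⊆ rootBall p a b i r := by
  obtain ⟨k, hk, hk'⟩ := not_disjoint_iff.1 h
  intro j hj
  obtain ⟨hja, hj⟩ := mem_rootBall.1 hj
  refine mem_rootBall.2 ⟨hja, ?_⟩
  have := (((mem_rootBall.1 hk).2.sub hp ((mem_rootBall.1 hk').2.mono hr)).add hp (hj.mono hr))
  rwa [show zrt a b i - zrt a b k - (zrt a b i' - zrt a b k) + (zrt a b i' - zrt a b j)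
    = zrt a b i - zrt a b j by ring] at this

theorem rootBall_eq_support (hz : ∀ j k, zrt a b j = zrt a b k) :
    rootBall p a b i r = ({j | a j ≠ 0} : Finset (Fin K)) := by
  ext j
  simp [mem_rootBall, hz i j, ValGt.zero]

open scoped Classical in
noncomputable def rootBalls (p : ℕ) (a b : Fin K → ℚ) : Finset (Finset (Fin K)) :=
  {S | ∃ i, a i ≠ 0 ∧ ∃ r, rootBall p a b i r = S}

theorem mem_rootBalls : S ∈ rootBalls p a b ↔ ∃ i, a i ≠ 0 ∧ ∃ r, rootBall p a b i r = S := by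
  simp [rootBalls]

theorem rootBall_mem_rootBalls (hi : a i ≠ 0) : rootBall p a b i r ∈ rootBalls p a b :=
  mem_rootBalls.2 ⟨i, hi, r, rfl⟩

theorem isLaminar_rootBalls (hp : p.Prime) : IsLaminar (rootBalls p a b) := by
  intro S hS T hT
  obtain ⟨i, -, r, rfl⟩ := mem_rootBalls.1 hS
  obtain ⟨i', -, r', rfl⟩ := mem_rootBalls.1 hT
  by_cases h : Disjoint (rootBall p a b i r) (rootBall p a b i' r')
  · exact Or.inr (Or.inr h)
  rcases le_total r r' with hr | hr
  · exact Or.inr (Or.inl (rootBall_subset_of_le hp hr h))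
  · exact Or.inl (rootBall_subset_of_le hp hr (fun h' => h h'.symm))

theorem nonempty_of_mem_rootBalls (hS : S ∈ rootBalls p a b) : S.Nonempty := by
  obtain ⟨i, hi, r, rfl⟩ := mem_rootBalls.1 hS
  exact ⟨i, self_mem_rootBall hi⟩

theorem subset_support_of_mem_rootBalls (hS : S ∈ rootBalls p a b) :
    S ⊆ ({j | a j ≠ 0} : Finset (Fin K)) := by
  obtain ⟨i, -, r, rfl⟩ := mem_rootBalls.1 hS
  exact rootBall_subset_support

theorem card_rootBalls_le (hp : p.Prime) : #(rootBalls p a b) ≤ 2 * #{j | a j ≠ 0} - 1 :=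
  (isLaminar_rootBalls hp).card_le_two_mul_sub_one (fun _ => nonempty_of_mem_rootBalls)
    (fun _ => subset_support_of_mem_rootBalls)

theorem card_rootBalls_le_one (hz : ∀ j k, zrt a b j = zrt a b k) : #(rootBalls p a b) ≤ 1 :=
  card_le_one.2 fun S hS T hT => by
    obtain ⟨i, -, r, rfl⟩ := mem_rootBalls.1 hS
    obtain ⟨i', -, r', rfl⟩ := mem_rootBalls.1 hT
    rw [rootBall_eq_support hz, rootBall_eq_support hz]

theorem card_rootBalls_erase_support_le (hp : p.Prime) :
    #((rootBalls p a b).erase {j | a j ≠ 0}) ≤ 2 * #{j | a j ≠ 0} - 2 :=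
  IsLaminar.card_le_two_mul_sub_two _ ((isLaminar_rootBalls hp).subset (erase_subset _ _))
    (fun _ hS => nonempty_of_mem_rootBalls (mem_of_mem_erase hS))
    (fun _ hS => subset_support_of_mem_rootBalls (mem_of_mem_erase hS)) (notMem_erase _ _)

end RootBall

section Parametrization

variable {p K : ℕ} {a b : Fin K → ℚ} {i i₀ : Fin K} {r r₀ : ℝ}

/-- The part of `g_{i,j}` that stays constant while the ball `S` about `z_i` is fixed. -/
noncomputable def gfunConst (p : ℕ) (a b : Fin K → ℚ) (i : Fin K) (S : Finset (Fin K))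
    (j : Fin K) : ℝ :=
  if a j ≠ 0 then
    padicValRat p (a j) + if j ∈ S then 0 else (padicValRat p (zrt a b i - zrt a b j) : ℝ)
  else padicValRat p (b j)

theorem gfun_eq_gfunConst_add (j : Fin K) :
    gfun p a b i j r =
      gfunConst p a b i (rootBall p a b i r) j + if j ∈ rootBall p a b i r then r else 0 := by
  by_cases hj : a j = 0
  · simp [gfun, gfunConst, hj, mem_rootBall]
  by_cases hz : zrt a b j = zrt a b i
  · simp [gfun, gfunConst, hj, hz, mem_rootBall, ValGt.zero, add_comm]
  have hz' : zrt a b i - zrt a b j ≠ 0 := sub_ne_zero.2 (Ne.symm hz)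
  by_cases hr : r < padicValRat p (zrt a b i - zrt a b j)
  · simp [gfun, gfunConst, hj, hz, mem_rootBall, ValGt, hz', hr, hr.le]
  · simp [gfun, gfunConst, hj, hz, mem_rootBall, ValGt, hz', hr, (not_lt.1 hr)]

theorem gfunConst_eq_of_mem_rootBall (hp : p.Prime) (hi : i ∈ rootBall p a b i₀ r₀) :
    gfunConst p a b i (rootBall p a b i₀ r₀) = gfunConst p a b i₀ (rootBall p a b i₀ r₀) := by
  funext j
  by_cases hj : j ∈ rootBall p a b i₀ r₀
  · simp [gfunConst, hj]
  have hfar : ¬ValGt p r₀ (zrt a b i₀ - zrt a b j) ∨ a j = 0 := by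
    by_contra! h
    exact hj (mem_rootBall.2 ⟨h.2, h.1⟩)
  rcases hfar with hfar | hja
  · have hval := padicValRat_sub_eq_of_valGt hp hfar (mem_rootBall.1 hi).2
    rw [sub_sub_sub_cancel_left] at hval
    simp [gfunConst, hj, hval]
  · simp [gfunConst, hja]

noncomputable def moment (a b : Fin K → ℚ) : (Fin K → ℝ) →ₗ[ℝ] ℝ × ℝ :=
  (∑ j, (a j : ℝ) • LinearMap.proj j).prod (∑ j, (b j : ℝ) • LinearMap.proj j)

theorem phiMap_eq_moment : phiMap p a b i r = moment a b (fun j => gfun p a b i j r) := by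
  simp [phiMap, moment]

theorem phiMap_eq_add_smul :
    phiMap p a b i r = moment a b (gfunConst p a b i (rootBall p a b i r)) +
      r • moment a b (fun j => if j ∈ rootBall p a b i r then 1 else 0) := by
  rw [phiMap_eq_moment, ← map_smul, ← map_add]
  congr 1
  funext j
  simp [gfun_eq_gfunConst_add]

end Parametrization

section Cover

variable {p K : ℕ} {a b : Fin K → ℚ} {i : Fin K} {r s : ℝ} {S : Finset (Fin K)}

def amoebaPiece (p : ℕ) (a b : Fin K → ℚ) (S : Finset (Fin K)) : Set (ℝ × ℝ) :=
  {y | ∃ i r, a i ≠ 0 ∧ rootBall p a b i r = S ∧ phiMap p a b i r = y}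

theorem amoebaPiece_subset_line (hp : p.Prime) (hS : S ∈ rootBalls p a b) :
    ∃ x₀ v : ℝ × ℝ, v ≠ 0 ∧ amoebaPiece p a b S ⊆ {y | ∃ t : ℝ, y = x₀ + t • v} := by
  obtain ⟨i₀, -, r₀, rfl⟩ := mem_rootBalls.1 hS
  obtain ⟨v, hv, c, hd⟩ : ∃ v : ℝ × ℝ, v ≠ 0 ∧ ∃ c : ℝ,
      moment a b (fun j => if j ∈ rootBall p a b i₀ r₀ then 1 else 0) = c • v := by
    by_cases hd : moment a b (fun j => if j ∈ rootBall p a b i₀ r₀ then 1 else 0) = 0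
    · obtain ⟨v, hv⟩ := exists_ne (0 : ℝ × ℝ)
      exact ⟨v, hv, 0, by rw [hd, zero_smul]⟩
    · exact ⟨_, hd, 1, (one_smul ℝ _).symm⟩
  refine ⟨moment a b (gfunConst p a b i₀ (rootBall p a b i₀ r₀)), v, hv, ?_⟩
  rintro _ ⟨i, r, hi, hball, rfl⟩
  refine ⟨r * c, ?_⟩
  rw [phiMap_eq_add_smul, hball, gfunConst_eq_of_mem_rootBall hp (hball ▸ self_mem_rootBall hi),
    hd, smul_smul]

theorem amoeba_subset_biUnion_amoebaPiece :
    amoeba p a b ⊆ ⋃ S ∈ rootBalls p a b, amoebaPiece p a b S := by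
  rintro _ ⟨i, hi, r, rfl⟩
  exact Set.mem_biUnion (rootBall_mem_rootBalls hi) ⟨i, r, hi, rfl, rfl⟩

/-- Here every `g_{i,j}(s)` equals `v_p(a_j) + s`, and `Σ_j a_j = Σ_j b_j = 0` kills the `s`. -/
theorem phiMap_eq_of_forall_le (hall : ∀ j, a j ≠ 0) (ha : ∑ j, a j = 0) (hb : ∑ j, b j = 0)
    (h : ∀ j, zrt a b j ≠ zrt a b i → s ≤ padicValRat p (zrt a b i - zrt a b j)) :
    phiMap p a b i s = moment a b (fun j => padicValRat p (a j)) := by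
  have hg : (fun j => gfun p a b i j s) = (fun j => (padicValRat p (a j) : ℝ)) + s • 1 := by
    funext j
    by_cases hz : zrt a b j = zrt a b i
    · simp [gfun, hall j, hz]
    · simp [gfun, hall j, hz, min_eq_left (h j hz)]
  have hsum : moment a b 1 = 0 := by
    simp [moment, ← Rat.cast_sum, ha, hb]
  rw [phiMap_eq_moment, hg, map_add, map_smul, hsum, smul_zero, add_zero]

theorem exists_phiMap_eq_of_rootBall_eq_support (hall : ∀ j, a j ≠ 0) (ha : ∑ j, a j = 0)
    (hb : ∑ j, b j = 0) (hz : ∃ j, zrt a b j ≠ zrt a b i)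
    (hS : rootBall p a b i r = ({j | a j ≠ 0} : Finset (Fin K))) :
    ∃ s, rootBall p a b i s ≠ ({j | a j ≠ 0} : Finset (Fin K)) ∧
      phiMap p a b i s = phiMap p a b i r := by
  classical
  obtain ⟨jm, hjm, hmin⟩ := Finset.exists_min_image ({j | zrt a b j ≠ zrt a b i} : Finset _)
    (fun j => padicValRat p (zrt a b i - zrt a b j)) (by simpa [Finset.Nonempty] using hz)
  have hjm : zrt a b i - zrt a b jm ≠ 0 := sub_ne_zero.2 (Ne.symm (by simpa using hjm))
  refine ⟨padicValRat p (zrt a b i - zrt a b jm), fun h => ?_, ?_⟩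
  · have hmem : jm ∈ rootBall p a b i (padicValRat p (zrt a b i - zrt a b jm)) := by
      rw [h]; simpa using hall jm
    simp [mem_rootBall, ValGt, hjm] at hmem
  · rw [phiMap_eq_of_forall_le hall ha hb (fun j hj => by exact_mod_cast hmin j (by simpa using hj)),
      phiMap_eq_of_forall_le hall ha hb]
    intro j hj
    have hmem : j ∈ rootBall p a b i r := by
      rw [hS]; simpa using hall j
    exact ((mem_rootBall.1 hmem).2.resolve_left (sub_ne_zero.2 (Ne.symm hj))).le

theorem amoeba_subset_biUnion_amoebaPiece_erase (hall : ∀ j, a j ≠ 0) (ha : ∑ j, a j = 0)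
    (hb : ∑ j, b j = 0) (hz : ∃ j k, zrt a b j ≠ zrt a b k) :
    amoeba p a b ⊆
      ⋃ S ∈ (rootBalls p a b).erase {j | a j ≠ 0}, amoebaPiece p a b S := by
  rintro _ ⟨i, hi, r, rfl⟩
  have hzi : ∃ j, zrt a b j ≠ zrt a b i := by
    obtain ⟨j, k, hjk⟩ := hz
    by_cases hj : zrt a b j = zrt a b i
    · exact ⟨k, fun hk => hjk (hj.trans hk.symm)⟩
    · exact ⟨j, hj⟩
  obtain ⟨s, hs, hφ⟩ : ∃ s, rootBall p a b i s ≠ ({j | a j ≠ 0} : Finset (Fin K)) ∧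
      phiMap p a b i s = phiMap p a b i r := by
    by_cases hS : rootBall p a b i r = ({j | a j ≠ 0} : Finset (Fin K))
    · exact exists_phiMap_eq_of_rootBall_eq_support hall ha hb hzi hS
    · exact ⟨r, hS, rfl⟩
  exact Set.mem_biUnion (mem_erase.2 ⟨hs, rootBall_mem_rootBalls hi⟩) ⟨i, s, hi, rfl, hφ⟩

end Cover

theorem exists_lines_of_finset {ι E : Type*} [AddCommGroup E] [Module ℝ E] {A : Set E} {m : ℕ}
    (F : Finset ι) (hm : #F ≤ m) (P : ι → Set E)
    (hP : ∀ S ∈ F, ∃ x₀ v : E, v ≠ 0 ∧ P S ⊆ {y | ∃ t : ℝ, y = x₀ + t • v})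
    (hA : A ⊆ ⋃ S ∈ F, P S) :
    ∃ (N : ℕ) (L : Fin N → Set E), N ≤ m ∧
      (∀ k : Fin N, ∃ x₀ v : E, v ≠ 0 ∧ L k = {y | ∃ t : ℝ, y = x₀ + t • v}) ∧
      A ⊆ ⋃ k : Fin N, L k := by
  choose! x v hv hPv using hP
  refine ⟨#F, fun k => {y | ∃ t : ℝ, y = x (F.equivFin.symm k) + t • v (F.equivFin.symm k)},
    hm, fun k => ⟨_, _, hv _ (F.equivFin.symm k).2, rfl⟩, fun y hy => ?_⟩
  obtain ⟨S, hS, hyS⟩ := Set.mem_iUnion₂.1 (hA hy)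
  exact Set.mem_iUnion.2 ⟨F.equivFin ⟨S, hS⟩, by simpa using hPv S hS hyS⟩

theorem stmt6_general (p n : ℕ) (hp : p.Prime)
    (a b : Fin (n + 3) → ℚ)
    (ha : ∑ j, a j = 0) (hb : ∑ j, b j = 0) :
    ∃ (N : ℕ) (L : Fin N → Set (ℝ × ℝ)), N ≤ 2 * n + 4 ∧
      (∀ k : Fin N, ∃ x₀ v : ℝ × ℝ, v ≠ 0 ∧ L k = {y | ∃ t : ℝ, y = x₀ + t • v}) ∧
      amoeba p a b ⊆ ⋃ k : Fin N, L k := by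
  by_cases hgen : (∀ j, a j ≠ 0) ∧ ∃ j k, zrt a b j ≠ zrt a b k
  · obtain ⟨hall, hz⟩ := hgen
    have hsupp : #({j | a j ≠ 0} : Finset (Fin (n + 3))) = n + 3 := by
      rw [filter_true_of_mem fun j _ => hall j, card_univ, Fintype.card_fin]
    have hcard := card_rootBalls_erase_support_le hp (a := a) (b := b)
    rw [hsupp] at hcard
    exact exists_lines_of_finset _ (hcard.trans (by omega)) _
      (fun S hS => amoebaPiece_subset_line hp (mem_of_mem_erase hS))
      (amoeba_subset_biUnion_amoebaPiece_erase hall ha hb hz)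
  · have hcard : #(rootBalls p a b) ≤ 2 * n + 4 := by
      have hballs := card_rootBalls_le hp (a := a) (b := b)
      by_cases hzero : ∃ j, a j = 0
      · obtain ⟨j, hj⟩ := hzero
        have hsupp := card_lt_univ_of_notMem (s := {j | a j ≠ 0}) (x := j) (by simpa using hj)
        rw [Fintype.card_fin] at hsupp
        omega
      · push Not at hgen hzero
        exact (card_rootBalls_le_one (hgen hzero)).trans (by omega)
    exact exists_lines_of_finset _ hcard _ (fun S hS => amoebaPiece_subset_line hp hS)
      amoeba_subset_biUnion_amoebaPiece

theorem stmt6 (p n : ℕ) (hp : p.Prime) (hn : 1 ≤ n)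
    (a b : Fin (n + 3) → ℚ)
    (ha : ∑ j, a j = 0) (hb : ∑ j, b j = 0)
    (hab : ∀ j, (a j, b j) ≠ ((0 : ℚ), (0 : ℚ)))
    (h0 : ∀ j k, a j = 0 → a k = 0 → j = k) :
    ∃ (N : ℕ) (L : Fin N → Set (ℝ × ℝ)), N ≤ 2 * n + 4 ∧
      (∀ k : Fin N, ∃ x₀ v : ℝ × ℝ, v ≠ 0 ∧ L k = {y | ∃ t : ℝ, y = x₀ + t • v}) ∧
      amoeba p a b ⊆ ⋃ k : Fin N, L k :=
  stmt6_general p n hp a b ha hb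
end

section
/- Let i and j be indices with a_i ≠ 0, a_j ≠ 0 and z_i ≠ z_j, and set q = v_p(z_i − z_j). Then φ_i(r) = φ_j(r) for every real r ≤ q; that is, the two tropical parametrizations agree on the ray (−∞, q]. -/
theorem stmt9 (p n : ℕ) (hp : p.Prime) (hn : 1 ≤ n)
    (a b : Fin (n + 3) → ℚ)
    (ha : ∑ j, a j = 0) (hb : ∑ j, b j = 0)
    (hab : ∀ j, (a j, b j) ≠ ((0 : ℚ), (0 : ℚ)))
    (i j : Fin (n + 3)) (hi : a i ≠ 0) (hj : a j ≠ 0)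
    (hz : zrt a b i ≠ zrt a b j)
    (q : ℤ) (hq : q = padicValRat p (zrt a b i - zrt a b j)) :
    ∀ r : ℝ, r ≤ (q : ℝ) → phiMap p a b i r = phiMap p a b j r := by
  haveI : Fact p.Prime := ⟨hp⟩
  intro r hr
  set zi := zrt a b i
  set zj := zrt a b j
  have hD : zi - zj ≠ 0 := sub_ne_zero.mpr hz
  -- main claim: gfun p a b i k r = gfun p a b j k r for all k
  have key : ∀ k, gfun p a b i k r = gfun p a b j k r := by
    intro k
    unfold gfun
    by_cases hak : a k ≠ 0
    · rw [if_pos hak, if_pos hak]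
      set zk := zrt a b k
      by_cases hki : zk = zi
      · -- then zk ≠ zj
        have hkj : ¬ zk = zj := by rw [hki]; exact hz
        rw [if_pos hki, if_neg hkj]
        have : zj - zk = -(zi - zj) := by rw [hki]; ring
        have hmin : min r ((padicValRat p (zj - zk) : ℝ)) = r := by
          rw [this, padicValRat.neg, ← hq]
          exact min_eq_left hr
        rw [hmin]
      · by_cases hkj : zk = zj
        · rw [if_neg hki, if_pos hkj]
          have : zi - zk = zi - zj := by rw [hkj]
          have hmin : min r ((padicValRat p (zi - zk) : ℝ)) = r := by
            rw [this, ← hq]; exact min_eq_left hr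
          rw [hmin]
        · rw [if_neg hki, if_neg hkj]
          -- show min r (v(zi-zk)) = min r (v(zj-zk))
          have hA : zi - zk ≠ 0 := sub_ne_zero.mpr (fun h => hki h.symm)
          have hB : zj - zk ≠ 0 := sub_ne_zero.mpr (fun h => hkj h.symm)
          set vA := padicValRat p (zi - zk)
          set vB := padicValRat p (zj - zk)
          have hAB : vA < q → vB = vA := by
            intro h
            have hne : vA ≠ padicValRat p (-(zi - zj)) := by
              rw [padicValRat.neg, ← hq]; exact ne_of_lt h
            have hsum : (zi - zk) + (-(zi - zj)) = zj - zk := by ring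
            have := padicValRat.add_eq_min (p := p) (q := zi - zk) (r := -(zi - zj))
              (by rw [hsum]; exact hB) hA (neg_ne_zero.mpr hD) hne
            rw [hsum, padicValRat.neg, ← hq] at this
            rw [show vB = padicValRat p (zj - zk) from rfl, this, min_eq_left h.le]
          have hBA : vB < q → vA = vB := by
            intro h
            have hne : vB ≠ padicValRat p (zi - zj) := by
              rw [← hq]; exact ne_of_lt h
            have hsum : (zj - zk) + (zi - zj) = zi - zk := by ring
            have := padicValRat.add_eq_min (p := p) (q := zj - zk) (r := zi - zj)
              (by rw [hsum]; exact hA) hB hD hne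
            rw [hsum, ← hq] at this
            rw [show vA = padicValRat p (zi - zk) from rfl, this, min_eq_left h.le]
          by_cases h1 : vA < q
          · rw [hAB h1]
          · by_cases h2 : vB < q
            · rw [hBA h2]
            · push_neg at h1 h2
              have e1 : min r (vA : ℝ) = r := min_eq_left (hr.trans (by exact_mod_cast h1))
              have e2 : min r (vB : ℝ) = r := min_eq_left (hr.trans (by exact_mod_cast h2))
              rw [e1, e2]
    · rw [if_neg hak, if_neg hak]
  simp only [phiMap]
  congr 1 <;> exact Finset.sum_congr rfl (fun k _ => by rw [key k])
end

section
/- Let L_1, …, L_N be finitely many affine lines (translates of 1-dimensional linear subspaces) in ℝ². Then the complement ℝ² ∖ (L_1 ∪ ⋯ ∪ L_N) has at most N(N−1)/2 + N + 1 connected components. -/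
/-!
Each line is the zero set of an affine functional, so a point off the lines has a sign vector in
`{±1}^N`, and the points with a given sign vector form a convex, hence connected, set. The number of
components is therefore at most the number of realised sign vectors. These are counted by
induction on the number of functionals: a sign vector of the first `m` functionals extends in both
ways only if it is realised on both sides of the last hyperplane, hence, by convexity, on the
hyperplane itself, which has one dimension less. On a convex set of dimension `d` this gives the
bound `∑ i ≤ d, (m choose i)`, which for `d = 2` is `N(N-1)/2 + N + 1`.
-/

open Set Module

theorem Set.ncard_le_ncard_image_init_add {α : Type*} [Finite α] {m : ℕ}
    {P : Set (Fin (m + 1) → α)} {a b : α}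
    (hP : ∀ σ ∈ P, σ (Fin.last m) = a ∨ σ (Fin.last m) = b) :
    P.ncard ≤ (Fin.init '' P).ncard +
      {τ : Fin m → α | Fin.snoc τ a ∈ P ∧ Fin.snoc τ b ∈ P}.ncard := by
  let slice (c : α) : Set (Fin m → α) := (fun τ => Fin.snoc τ c) ⁻¹' P
  have hslice (c : α) : (slice c).ncard = (P ∩ {σ | σ (Fin.last m) = c}).ncard := by
    rw [← ncard_image_of_injective (slice c) (Fin.snoc_left_injective (α := fun _ => α) c),
      image_preimage_eq_inter_range]
    congr 2
    ext σ
    refine ⟨?_, fun h => ⟨Fin.init σ, by rw [← h]; exact Fin.snoc_init_self σ⟩⟩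
    rintro ⟨τ, rfl⟩
    exact Fin.snoc_last _ _
  have hunion : slice a ∪ slice b ⊆ Fin.init '' P := by
    rintro τ (h | h) <;> exact ⟨_, h, Fin.init_snoc _ _⟩
  calc P.ncard ≤ (P ∩ {σ | σ (Fin.last m) = a} ∪ P ∩ {σ | σ (Fin.last m) = b}).ncard :=
        ncard_le_ncard fun σ hσ => (hP σ hσ).imp (⟨hσ, ·⟩) (⟨hσ, ·⟩)
    _ ≤ (slice a).ncard + (slice b).ncard := by rw [hslice, hslice]; exact ncard_union_le _ _
    _ = (slice a ∪ slice b).ncard + (slice a ∩ slice b).ncard :=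
        (ncard_union_add_ncard_inter _ _).symm
    _ ≤ _ := Nat.add_le_add_right (ncard_le_ncard hunion) _

theorem Nat.sum_range_choose_succ (m d : ℕ) :
    ∑ i ∈ Finset.range (d + 1), (m + 1).choose i =
      ∑ i ∈ Finset.range (d + 1), m.choose i + ∑ i ∈ Finset.range d, m.choose i := by
  rw [Finset.sum_range_succ', Finset.sum_range_succ' (fun i => m.choose i)]
  simp only [Nat.choose_succ_succ, Finset.sum_add_distrib, Nat.choose_zero_right]
  ring

theorem finrank_vectorSpan_inter_zero_lt {E : Type*} [AddCommGroup E] [Module ℝ E]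
    [FiniteDimensional ℝ E] {s : Set E} (f : E →ᵃ[ℝ] ℝ) {x y : E} (hx : x ∈ s) (hy : y ∈ s)
    (hxy : f x ≠ f y) :
    finrank ℝ (vectorSpan ℝ (s ∩ {z | f z = 0})) < finrank ℝ (vectorSpan ℝ s) := by
  have hker : vectorSpan ℝ (s ∩ {z | f z = 0}) ≤ LinearMap.ker f.linear := by
    rw [vectorSpan_def, Submodule.span_le]
    rintro _ ⟨p, ⟨-, hp⟩, q, ⟨-, hq⟩, rfl⟩
    rw [SetLike.mem_coe, LinearMap.mem_ker, f.linearMap_vsub, hp, hq, vsub_self]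
  refine Submodule.finrank_lt_finrank_of_lt <|
    (vectorSpan_mono ℝ inter_subset_left).lt_of_ne fun h => hxy ?_
  have := hker (h ▸ vsub_mem_vectorSpan ℝ hx hy)
  rwa [LinearMap.mem_ker, f.linearMap_vsub, vsub_eq_sub, sub_eq_zero] at this

theorem exists_lineMap_eq_zero {a b : ℝ} (ha : 0 < a) (hb : b < 0) :
    ∃ t ∈ Icc (0 : ℝ) 1, AffineMap.lineMap a b t = 0 := by
  have hab : 0 < a - b := by linarith
  refine ⟨a / (a - b), ⟨div_nonneg ha.le hab.le, (div_le_one hab).2 (by linarith)⟩, ?_⟩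
  rw [AffineMap.lineMap_apply_ring']
  field_simp
  ring

namespace AffineArrangement

variable {E ι : Type*} [AddCommGroup E] [Module ℝ E]

noncomputable def signVector (g : ι → E →ᵃ[ℝ] ℝ) (x : E) : ι → SignType :=
  fun k => SignType.sign (g k x)

noncomputable def regionSigns (g : ι → E →ᵃ[ℝ] ℝ) (s : Set E) : Set (ι → SignType) :=
  signVector g '' (s ∩ {x | ∀ k, g k x ≠ 0})

theorem ne_zero_of_signVector_eq {g : ι → E →ᵃ[ℝ] ℝ} {x y : E}
    (hxy : signVector g x = signVector g y) (hy : ∀ k, g k y ≠ 0) (k : ι) : g k x ≠ 0 := by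
  have := congrFun hxy k
  simp only [signVector] at this
  rw [← sign_ne_zero, this, sign_ne_zero]
  exact hy k

theorem convex_setOf_sign_eq (f : E →ᵃ[ℝ] ℝ) (c : SignType) :
    Convex ℝ {x | SignType.sign (f x) = c} := by
  refine (?_ : Convex ℝ (SignType.sign ⁻¹' {c} : Set ℝ)).affine_preimage f
  obtain rfl | rfl | rfl := c.trichotomy
  · rw [show (SignType.sign ⁻¹' {-1} : Set ℝ) = Iio 0 by ext; simp [sign_eq_neg_one_iff]]
    exact convex_Iio 0
  · rw [show (SignType.sign ⁻¹' {0} : Set ℝ) = {0} by ext; simp [sign_eq_zero_iff]]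
    exact convex_singleton 0
  · rw [show (SignType.sign ⁻¹' {1} : Set ℝ) = Ioi 0 by ext; simp [sign_eq_one_iff]]
    exact convex_Ioi 0

theorem convex_setOf_signVector_eq (g : ι → E →ᵃ[ℝ] ℝ) (σ : ι → SignType) :
    Convex ℝ {x | signVector g x = σ} := by
  simp only [signVector, funext_iff, ofPred_forall]
  exact convex_iInter fun k => convex_setOf_sign_eq (g k) (σ k)

theorem image_init_regionSigns_subset {m : ℕ} (g : Fin (m + 1) → E →ᵃ[ℝ] ℝ) (s : Set E) :
    Fin.init '' regionSigns g s ⊆ regionSigns (Fin.init g) s := by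
  rintro _ ⟨_, ⟨x, ⟨hxs, hx⟩, rfl⟩, rfl⟩
  exact ⟨x, ⟨hxs, fun k => hx k.castSucc⟩, rfl⟩

theorem last_eq_one_or_neg_one_of_mem_regionSigns {m : ℕ} {g : Fin (m + 1) → E →ᵃ[ℝ] ℝ}
    {s : Set E} {σ : Fin (m + 1) → SignType} (hσ : σ ∈ regionSigns g s) :
    σ (Fin.last m) = 1 ∨ σ (Fin.last m) = -1 := by
  obtain ⟨x, ⟨-, hx⟩, rfl⟩ := hσ
  rcases (hx (Fin.last m)).lt_or_gt with h | h
  · exact .inr (sign_neg h)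
  · exact .inl (sign_pos h)

theorem crossing_subset_regionSigns_inter {m : ℕ} (g : Fin (m + 1) → E →ᵃ[ℝ] ℝ) {s : Set E}
    (hs : Convex ℝ s) :
    {τ | Fin.snoc τ 1 ∈ regionSigns g s ∧ Fin.snoc τ (-1) ∈ regionSigns g s} ⊆
      regionSigns (Fin.init g) (s ∩ {x | g (Fin.last m) x = 0}) := by
  rintro τ ⟨⟨x, ⟨hxs, hx⟩, hxτ⟩, ⟨y, ⟨hys, hy⟩, hyτ⟩⟩
  have hx_init : signVector (Fin.init g) x = τ :=
    (congrArg Fin.init hxτ).trans (Fin.init_snoc _ _)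
  have hy_init : signVector (Fin.init g) y = τ :=
    (congrArg Fin.init hyτ).trans (Fin.init_snoc _ _)
  have hx_last : 0 < g (Fin.last m) x := by
    simpa [signVector, sign_eq_one_iff] using congrFun hxτ (Fin.last m)
  have hy_last : g (Fin.last m) y < 0 := by
    simpa [signVector, sign_eq_neg_one_iff] using congrFun hyτ (Fin.last m)
  obtain ⟨t, ht, hzero⟩ := exists_lineMap_eq_zero hx_last hy_last
  have hz_init : signVector (Fin.init g) (AffineMap.lineMap x y t) = τ :=
    (convex_setOf_signVector_eq (Fin.init g) τ).lineMap_mem hx_init hy_init ht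
  refine ⟨AffineMap.lineMap x y t, ⟨⟨hs.lineMap_mem hxs hys ht, ?_⟩, ?_⟩, hz_init⟩
  · rwa [mem_ofPred_eq, AffineMap.apply_lineMap]
  · exact ne_zero_of_signVector_eq (hz_init.trans hx_init.symm) fun k => hx k.castSucc

theorem ncard_regionSigns_le [FiniteDimensional ℝ E] {m d : ℕ} (g : Fin m → E →ᵃ[ℝ] ℝ)
    {s : Set E} (hs : Convex ℝ s) (hd : finrank ℝ (vectorSpan ℝ s) ≤ d) :
    (regionSigns g s).ncard ≤ ∑ i ∈ Finset.range (d + 1), m.choose i := by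
  induction m generalizing d s with
  | zero => simpa [Finset.sum_range_succ'] using ncard_le_one_of_subsingleton (regionSigns g s)
  | succ m ih =>
    set crossing := {τ | Fin.snoc τ 1 ∈ regionSigns g s ∧ Fin.snoc τ (-1) ∈ regionSigns g s}
    have hcrossing : crossing.ncard ≤ ∑ i ∈ Finset.range d, m.choose i := by
      obtain h | ⟨τ, ⟨x, ⟨hxs, -⟩, hxτ⟩, ⟨y, ⟨hys, -⟩, hyτ⟩⟩ :=
        crossing.eq_empty_or_nonempty
      · simp [h]
      have hxy : g (Fin.last m) x ≠ g (Fin.last m) y := fun h => by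
        have hx := congrFun hxτ (Fin.last m)
        have hy := congrFun hyτ (Fin.last m)
        simp only [signVector, Fin.snoc_last, h] at hx hy
        exact absurd (hx.symm.trans hy) (by decide)
      have hlt := finrank_vectorSpan_inter_zero_lt (g (Fin.last m)) hxs hys hxy
      obtain ⟨d, rfl⟩ := Nat.exists_eq_add_one_of_ne_zero (by omega : d ≠ 0)
      exact (ncard_le_ncard (crossing_subset_regionSigns_inter g hs)).trans <|
        ih _ (hs.inter ((convex_singleton 0).affine_preimage _)) (by omega)
    calc (regionSigns g s).ncard
        ≤ (Fin.init '' regionSigns g s).ncard + crossing.ncard :=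
          ncard_le_ncard_image_init_add fun _ => last_eq_one_or_neg_one_of_mem_regionSigns
      _ ≤ ∑ i ∈ Finset.range (d + 1), m.choose i + ∑ i ∈ Finset.range d, m.choose i :=
          add_le_add ((ncard_le_ncard (image_init_regionSigns_subset g s)).trans (ih _ hs hd))
            hcrossing
      _ = ∑ i ∈ Finset.range (d + 1), (m + 1).choose i := (Nat.sum_range_choose_succ m d).symm

section Topology

variable [TopologicalSpace E] [ContinuousAdd E] [ContinuousSMul ℝ E]

theorem connectedComponents_mk_eq_of_signVector_eq {g : ι → E →ᵃ[ℝ] ℝ}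
    {x y : ↥(⋃ k, {x | g k x = 0})ᶜ} (hxy : signVector g x = signVector g y) :
    ConnectedComponents.mk x = ConnectedComponents.mk y := by
  have hy : ∀ k, g k y ≠ 0 := by simpa using y.2
  have hcell : {z | signVector g z = signVector g y} ⊆ (⋃ k, {x | g k x = 0})ᶜ :=
    fun z hz => by simpa using ne_zero_of_signVector_eq hz hy
  have hx := (convex_setOf_signVector_eq g (signVector g y)).isPreconnected
    |>.subset_connectedComponentIn rfl hcell hxy
  rw [connectedComponentIn_eq_image y.2] at hx
  exact ConnectedComponents.coe_eq_coe'.2 (Subtype.val_injective.mem_set_image.1 hx)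

theorem mk_connectedComponents_le_ncard_regionSigns [Finite ι] (g : ι → E →ᵃ[ℝ] ℝ) :
    Cardinal.mk (ConnectedComponents ↥(⋃ k, {x | g k x = 0})ᶜ) ≤
      (regionSigns g univ).ncard := by
  have hrep (σ : regionSigns g univ) :
      ∃ x : ↥(⋃ k, {x | g k x = 0})ᶜ, signVector g x = σ := by
    obtain ⟨x, ⟨-, hx⟩, hσ⟩ := σ.2
    exact ⟨⟨x, by simpa using hx⟩, hσ⟩
  choose rep hrep using hrep
  have hsurj : Function.Surjective fun σ => ConnectedComponents.mk (rep σ) := by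
    rintro ⟨x⟩
    refine ⟨⟨signVector g x, x, ⟨trivial, by simpa using x.2⟩, rfl⟩, ?_⟩
    exact connectedComponents_mk_eq_of_signVector_eq (hrep _)
  have := Cardinal.lift_mk_le_lift_mk_of_surjective hsurj
  rwa [← Set.cast_ncard (toFinite _), Cardinal.lift_natCast, Cardinal.lift_le_nat_iff] at this

end Topology

end AffineArrangement

theorem exists_affineMap_line_eq_setOf_eq_zero (x₀ v : ℝ × ℝ) (hv : v ≠ 0) :
    ∃ g : ℝ × ℝ →ᵃ[ℝ] ℝ, {y | ∃ t : ℝ, y = x₀ + t • v} = {y | g y = 0} := by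
  let ℓ : ℝ × ℝ →ₗ[ℝ] ℝ := v.1 • LinearMap.snd ℝ ℝ ℝ - v.2 • LinearMap.fst ℝ ℝ ℝ
  let g : ℝ × ℝ →ᵃ[ℝ] ℝ := ℓ.toAffineMap - AffineMap.const ℝ (ℝ × ℝ) (ℓ x₀)
  have hg (y : ℝ × ℝ) : g y = v.1 * (y.2 - x₀.2) - v.2 * (y.1 - x₀.1) := by
    simp only [g, ℓ, AffineMap.coe_sub, LinearMap.coe_toAffineMap, AffineMap.coe_const,
      Pi.sub_apply, Function.const_apply, LinearMap.sub_apply, LinearMap.smul_apply,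
      LinearMap.snd_apply, LinearMap.fst_apply, smul_eq_mul]
    ring
  refine ⟨g, ?_⟩
  ext y
  rw [mem_ofPred_eq, mem_ofPred_eq, hg]
  constructor
  · rintro ⟨t, rfl⟩
    simp only [Prod.fst_add, Prod.snd_add, Prod.smul_fst, Prod.smul_snd, smul_eq_mul]
    ring
  · intro h
    obtain h₁ | h₂ : v.1 ≠ 0 ∨ v.2 ≠ 0 := by
      by_contra! hc
      exact hv (Prod.ext hc.1 hc.2)
    · refine ⟨(y.1 - x₀.1) / v.1, Prod.ext ?_ ?_⟩
      · simp [h₁]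
      · simp only [Prod.snd_add, Prod.smul_snd, smul_eq_mul]
        field_simp
        linear_combination h
    · refine ⟨(y.2 - x₀.2) / v.2, Prod.ext ?_ ?_⟩
      · simp only [Prod.fst_add, Prod.smul_fst, smul_eq_mul]
        field_simp
        linear_combination -h
      · simp [h₂]

open AffineArrangement in
theorem stmt11 (N : ℕ) (L : Fin N → Set (ℝ × ℝ))
    (hL : ∀ k : Fin N, ∃ x₀ v : ℝ × ℝ, v ≠ 0 ∧ L k = {y | ∃ t : ℝ, y = x₀ + t • v}) :
    Cardinal.mk (ConnectedComponents ↥((⋃ k : Fin N, L k)ᶜ))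
      ≤ ((N * (N - 1) / 2 + N + 1 : ℕ) : Cardinal) := by
  choose x₀ v hv hL using hL
  choose g hg using fun k => exists_affineMap_line_eq_setOf_eq_zero (x₀ k) (v k) (hv k)
  obtain rfl : L = fun k => {y | g k y = 0} := funext fun k => (hL k).trans (hg k)
  refine (mk_connectedComponents_le_ncard_regionSigns g).trans (Nat.cast_le.2 ?_)
  have hdim : finrank ℝ (vectorSpan ℝ (univ : Set (ℝ × ℝ))) ≤ 2 :=
    (Submodule.finrank_le _).trans (by simp)
  calc (regionSigns g univ).ncard ≤ ∑ i ∈ Finset.range 3, N.choose i :=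
        ncard_regionSigns_le g convex_univ hdim
    _ = N * (N - 1) / 2 + N + 1 := by
        simp only [Finset.sum_range_succ, Finset.range_one, Finset.sum_singleton,
          Nat.choose_zero_right, Nat.choose_one_right, Nat.choose_two_right]
        ring
end
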